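/- arXiv:2306.10546 — 3 statements merged into one kernel-verified Lean document; each statement's English description precedes it below -/
import Mathlib

section
/- Let X ~ N(0, V) be an m-dimensional centered Gaussian vector with positive definite covariance V, M = V⁻¹, a ∈ ℝ^m, and Δ = aᵀM. If Δ_i > 0 for all i, then P(X_j > a_j for all j) ≤ f(a, M) · (∏_i Δ_i)⁻¹, where f(a, M) = |M|^{1/2} (2π)^{-m/2} exp(-½ aᵀ M a). -/
open MeasureTheory Matrix Finset

/-! For `x` in the orthant put `y = x - a`. Since `M` is positive semidefinite,
`xᵀ M x = aᵀ M a + 2 Δ ⬝ y + yᵀ M y ≥ aᵀ M a + 2 Δ ⬝ y`, so the Gaussian density is bounded by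
`f(a) ∏ᵢ exp (-Δᵢ yᵢ)`. This bound factorises over the coordinates, and each factor integrates
over `yᵢ > 0` to `Δᵢ⁻¹`. -/

section PiProduct

variable {ι 𝕜 : Type*} [Fintype ι] [RCLike 𝕜] {E : ι → Type*} {mE : ∀ i, MeasurableSpace (E i)}
  {μ : (i : ι) → Measure (E i)} [∀ i, SigmaFinite (μ i)]

theorem setIntegral_univ_pi_prod_eq_prod (s : (i : ι) → Set (E i)) (f : (i : ι) → E i → 𝕜) :
    ∫ x in Set.univ.pi s, ∏ i, f i (x i) ∂Measure.pi μ = ∏ i, ∫ t in s i, f i t ∂μ i := by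
  rw [Measure.restrict_pi_pi, integral_fintype_prod_eq_prod]

theorem integrableOn_univ_pi_prod {s : (i : ι) → Set (E i)} {f : (i : ι) → E i → 𝕜}
    (hf : ∀ i, IntegrableOn (f i) (s i) (μ i)) :
    IntegrableOn (fun x ↦ ∏ i, f i (x i)) (Set.univ.pi s) (Measure.pi μ) := by
  rw [IntegrableOn, Measure.restrict_pi_pi]
  exact .fintype_prod_dep hf

end PiProduct

section ShiftedExp

variable (c : ℝ) {b : ℝ}

theorem exp_neg_mul_sub_eq_mul_exp (t : ℝ) :
    Real.exp (-(b * (t - c))) = Real.exp (b * c) * Real.exp (-b * t) := by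
  rw [← Real.exp_add]; ring_nf

theorem integral_Ioi_exp_neg_mul_sub (hb : 0 < b) :
    ∫ t in Set.Ioi c, Real.exp (-(b * (t - c))) = b⁻¹ := by
  simp_rw [exp_neg_mul_sub_eq_mul_exp c, integral_const_mul,
    integral_exp_mul_Ioi (neg_neg_of_pos hb)]
  rw [neg_div_neg_eq, ← mul_div_assoc, ← Real.exp_add, neg_mul, add_neg_cancel, Real.exp_zero,
    one_div]

theorem integrableOn_Ioi_exp_neg_mul_sub (hb : 0 < b) :
    IntegrableOn (fun t ↦ Real.exp (-(b * (t - c)))) (Set.Ioi c) := by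
  simp_rw [exp_neg_mul_sub_eq_mul_exp c]
  exact (exp_neg_integrableOn_Ioi c hb).const_mul _

end ShiftedExp

section QuadraticForm

variable {n : Type*} [Fintype n] {M : Matrix n n ℝ}

theorem Matrix.PosSemidef.dotProduct_mulVec_add_ge (hM : M.PosSemidef) (a y : n → ℝ) :
    a ⬝ᵥ M *ᵥ a + 2 * (a ᵥ* M ⬝ᵥ y) ≤ (a + y) ⬝ᵥ M *ᵥ (a + y) := by
  have hsymm : y ⬝ᵥ M *ᵥ a = a ᵥ* M ⬝ᵥ y := by
    rw [dotProduct_comm, ← vecMul_transpose, (isHermitian_iff_isSymm.mp hM.isHermitian).eq]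
  have hyy : 0 ≤ y ⬝ᵥ M *ᵥ y := by simpa using hM.dotProduct_mulVec_nonneg y
  rw [mulVec_add, dotProduct_add, add_dotProduct, add_dotProduct, dotProduct_mulVec a M y, hsymm]
  linarith

theorem Matrix.PosSemidef.exp_neg_half_dotProduct_mulVec_le (hM : M.PosSemidef) (a x : n → ℝ) :
    Real.exp (-(1 / 2) * (x ⬝ᵥ M *ᵥ x)) ≤
      Real.exp (-(1 / 2) * (a ⬝ᵥ M *ᵥ a)) * ∏ i, Real.exp (-((a ᵥ* M) i * (x i - a i))) := by
  have hx := hM.dotProduct_mulVec_add_ge a (x - a)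
  rw [add_sub_cancel] at hx
  rw [← Real.exp_sum, ← Real.exp_add, Real.exp_le_exp, sum_neg_distrib]
  have hdot : a ᵥ* M ⬝ᵥ (x - a) = ∑ i, (a ᵥ* M) i * (x i - a i) := rfl
  linarith

end QuadraticForm

theorem mills_ratio_upper (m : ℕ) (V : Matrix (Fin m) (Fin m) ℝ) (hV : V.PosDef)
    (a : Fin m → ℝ)
    (Δ : Fin m → ℝ) (hΔdef : ∀ i, Δ i = ∑ j, a j * V⁻¹ j i)
    (hΔ : ∀ i, 0 < Δ i)
    (f : (Fin m → ℝ) → ℝ)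
    (hf : ∀ x, f x = Real.sqrt (V⁻¹.det) * (2 * Real.pi) ^ (-(m : ℝ) / 2) *
        Real.exp (-(1 / 2) * (x ⬝ᵥ V⁻¹.mulVec x))) :
    (∫ x in {x : Fin m → ℝ | ∀ j, a j < x j}, f x) ≤ f a * (∏ i, Δ i)⁻¹ := by
  obtain rfl : Δ = a ᵥ* V⁻¹ := funext hΔdef
  simp only [hf]
  set C := Real.sqrt (V⁻¹.det) * (2 * Real.pi) ^ (-(m : ℝ) / 2)
  have hC : 0 ≤ C := by positivity
  have horthant : {x : Fin m → ℝ | ∀ j, a j < x j} = Set.univ.pi fun j ↦ Set.Ioi (a j) := by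
    ext x; simp
  calc ∫ x in {x : Fin m → ℝ | ∀ j, a j < x j}, C * Real.exp (-(1 / 2) * (x ⬝ᵥ V⁻¹ *ᵥ x))
      ≤ ∫ x in Set.univ.pi fun j ↦ Set.Ioi (a j), C * Real.exp (-(1 / 2) * (a ⬝ᵥ V⁻¹ *ᵥ a)) *
          ∏ i, Real.exp (-((a ᵥ* V⁻¹) i * (x i - a i))) := by
        rw [horthant]
        refine integral_mono_of_nonneg (.of_forall fun x ↦ by positivity)
          ((integrableOn_univ_pi_prod fun i ↦
            integrableOn_Ioi_exp_neg_mul_sub (a i) (hΔ i)).const_mul _) (.of_forall fun x ↦ ?_)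
        exact (mul_le_mul_of_nonneg_left
          (hV.inv.posSemidef.exp_neg_half_dotProduct_mulVec_le a x) hC).trans_eq (mul_assoc ..).symm
    _ = C * Real.exp (-(1 / 2) * (a ⬝ᵥ V⁻¹ *ᵥ a)) * (∏ i, (a ᵥ* V⁻¹) i)⁻¹ := by
        rw [integral_const_mul, volume_pi, setIntegral_univ_pi_prod_eq_prod _
          fun i t ↦ Real.exp (-((a ᵥ* V⁻¹) i * (t - a i))), ← prod_inv_distrib]
        simp only [integral_Ioi_exp_neg_mul_sub _ (hΔ _)]
end

section
/- Let X ~ N(0, V) be an m-dimensional centered Gaussian vector with positive definite covariance V, M = V⁻¹, a ∈ ℝ^m, Δ = aᵀM with Δ_i > 0 for all i. Then P(X_j > a_j for all j) ≥ f(a, M)·(∏_i Δ_i)⁻¹ · (1 - ½ Σ_i Σ_j m_{ij}(1 + δ_{ij})/(Δ_i Δ_j)), where f(a, M) = |M|^{1/2}(2π)^{-m/2} exp(-½ aᵀMa) and δ_{ij} is the Kronecker delta. -/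
open MeasureTheory Matrix Finset

/-!
Substituting `x = y + a` turns `{x | a < x}` into the positive orthant and, `M` being symmetric,
factors the Gaussian kernel as `exp (-½ aᵀMa) * exp (-Δ ⬝ᵥ y) * exp (-½ yᵀMy)`. Bounding the last
factor below by `1 - ½ yᵀMy` (that is, `1 + t ≤ exp t`) leaves the integrals of `exp (-Δ ⬝ᵥ y)`
and of `y i * y j * exp (-Δ ⬝ᵥ y)` over the positive orthant. These split into products of
one-dimensional Gamma integrals `∫ t in Ioi 0, t ^ n * exp (-(b * t)) = n! / b ^ (n + 1)`, and give
`(∏ k, Δ k)⁻¹` and `(1 + δᵢⱼ) / (Δ i * Δ j) * (∏ k, Δ k)⁻¹`.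
-/

section

open Real Set Nat

theorem integrableOn_pow_mul_exp_neg_mul_Ioi (n : ℕ) {b : ℝ} (hb : 0 < b) :
    IntegrableOn (fun t : ℝ => t ^ n * exp (-(b * t))) (Ioi 0) := by
  simpa [rpow_natCast] using
    integrableOn_rpow_mul_exp_neg_mul_rpow (s := n) (by linarith [n.cast_nonneg (α := ℝ)])
      zero_lt_one hb

theorem integral_pow_mul_exp_neg_mul_Ioi (n : ℕ) {b : ℝ} (hb : 0 < b) :
    ∫ t in Ioi 0, t ^ n * exp (-(b * t)) = n ! / b ^ (n + 1) := by
  have h := integral_rpow_mul_exp_neg_mul_Ioi (a := n + 1) (by positivity) hb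
  rw [add_sub_cancel_right, Gamma_nat_eq_factorial, ← Nat.cast_add_one, rpow_natCast] at h
  simpa [rpow_natCast, div_eq_inv_mul, inv_pow] using h

variable {ι : Type*} [Fintype ι]

theorem integrableOn_univ_pi_prod_s11 {s : ι → Set ℝ} {g : ι → ℝ → ℝ}
    (hg : ∀ k, IntegrableOn (g k) (s k)) :
    IntegrableOn (fun y : ι → ℝ => ∏ k, g k (y k)) (Set.univ.pi s) := by
  rw [IntegrableOn, volume_pi, Measure.restrict_pi_pi]
  exact Integrable.fintype_prod hg

theorem setIntegral_univ_pi_prod (s : ι → Set ℝ) (g : ι → ℝ → ℝ) :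
    ∫ y in Set.univ.pi s, ∏ k, g k (y k) = ∏ k, ∫ t in s k, g k t := by
  rw [volume_pi, Measure.restrict_pi_pi, integral_fintype_prod_eq_prod]

variable (ι) in
def posOrthant : Set (ι → ℝ) := Set.univ.pi fun _ => Ioi 0

theorem measurableSet_posOrthant : MeasurableSet (posOrthant ι) :=
  MeasurableSet.univ_pi fun _ => measurableSet_Ioi

theorem setIntegral_gt_eq_setIntegral_posOrthant_add (F : (ι → ℝ) → ℝ) (a : ι → ℝ) :
    ∫ x in {x | ∀ j, a j < x j}, F x = ∫ y in posOrthant ι, F (y + a) := by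
  rw [← (measurePreserving_add_right volume a).setIntegral_preimage_emb
    (measurableEmbedding_addRight a)]
  congr 2
  ext y
  simp [posOrthant]

theorem prod_exp_neg_mul (Δ y : ι → ℝ) : ∏ k, exp (-(Δ k * y k)) = exp (-(Δ ⬝ᵥ y)) := by
  rw [← exp_sum, dotProduct, ← sum_neg_distrib]

theorem dotProduct_mulVec_self_eq_sum {R : Type*} [CommSemiring R] (M : Matrix ι ι R)
    (y : ι → R) : y ⬝ᵥ M *ᵥ y = ∑ i, ∑ j, M i j * (y i * y j) := by
  simp only [dotProduct, mulVec, mul_sum]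
  exact sum_congr rfl fun i _ => sum_congr rfl fun j _ => by ring

theorem dotProduct_mulVec_add_self {R : Type*} [CommRing R] {M : Matrix ι ι R} (hM : M.IsSymm)
    (y a : ι → R) :
    (y + a) ⬝ᵥ M *ᵥ (y + a) = y ⬝ᵥ M *ᵥ y + 2 * ((a ᵥ* M) ⬝ᵥ y) + a ⬝ᵥ M *ᵥ a := by
  have hcross : y ⬝ᵥ M *ᵥ a = (a ᵥ* M) ⬝ᵥ y := by
    rw [← dotProduct_transpose_mulVec, hM.eq, dotProduct_mulVec]
  rw [mulVec_add, dotProduct_add, add_dotProduct, add_dotProduct, hcross, dotProduct_mulVec a M y]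
  ring

theorem exp_neg_half_dotProduct_mulVec_add {M : Matrix ι ι ℝ} (hM : M.IsSymm) (y a : ι → ℝ) :
    exp (-(1 / 2) * ((y + a) ⬝ᵥ M *ᵥ (y + a))) =
      exp (-(1 / 2) * (a ⬝ᵥ M *ᵥ a)) *
        (exp (-((a ᵥ* M) ⬝ᵥ y)) * exp (-(1 / 2) * (y ⬝ᵥ M *ᵥ y))) := by
  rw [dotProduct_mulVec_add_self hM, ← exp_add, ← exp_add]
  ring_nf

theorem exp_neg_dotProduct_mul_one_sub_eq (Δ y : ι → ℝ) (M : Matrix ι ι ℝ) :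
    exp (-(Δ ⬝ᵥ y)) * (1 - 1 / 2 * (y ⬝ᵥ M *ᵥ y)) =
      exp (-(Δ ⬝ᵥ y)) - 1 / 2 * ∑ i, ∑ j, M i j * (y i * y j * exp (-(Δ ⬝ᵥ y))) := by
  rw [dotProduct_mulVec_self_eq_sum, mul_sub, mul_one, mul_left_comm, mul_sum]
  congr 2
  exact sum_congr rfl fun i _ => by rw [mul_sum]; exact sum_congr rfl fun j _ => by ring

variable {Δ : ι → ℝ}

theorem integrableOn_posOrthant_monomial_mul_exp (hΔ : ∀ k, 0 < Δ k) (e : ι → ℕ) :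
    IntegrableOn (fun y => ∏ k, y k ^ e k * exp (-(Δ k * y k))) (posOrthant ι) :=
  integrableOn_univ_pi_prod_s11 fun k => integrableOn_pow_mul_exp_neg_mul_Ioi (e k) (hΔ k)

theorem integral_posOrthant_monomial_mul_exp (hΔ : ∀ k, 0 < Δ k) (e : ι → ℕ) :
    ∫ y in posOrthant ι, ∏ k, y k ^ e k * exp (-(Δ k * y k)) =
      ∏ k, (e k)! / Δ k ^ (e k + 1) := by
  rw [posOrthant, setIntegral_univ_pi_prod _ fun k t => t ^ e k * exp (-(Δ k * t))]
  exact prod_congr rfl fun k _ => integral_pow_mul_exp_neg_mul_Ioi (e k) (hΔ k)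

theorem integrableOn_posOrthant_exp_neg_dotProduct (hΔ : ∀ k, 0 < Δ k) :
    IntegrableOn (fun y => exp (-(Δ ⬝ᵥ y))) (posOrthant ι) := by
  simpa [prod_exp_neg_mul] using integrableOn_posOrthant_monomial_mul_exp hΔ 0

theorem integral_posOrthant_exp_neg_dotProduct (hΔ : ∀ k, 0 < Δ k) :
    ∫ y in posOrthant ι, exp (-(Δ ⬝ᵥ y)) = (∏ k, Δ k)⁻¹ := by
  simpa [prod_exp_neg_mul, prod_inv_distrib] using integral_posOrthant_monomial_mul_exp hΔ 0

variable [DecidableEq ι]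

theorem prod_pow_single {M : Type*} [CommMonoid M] (x : ι → M) (i : ι) (n : ℕ) :
    ∏ k, x k ^ (Pi.single i n : ι → ℕ) k = x i ^ n :=
  (Fintype.prod_eq_single i fun k hk => by simp [hk]).trans (by simp)

theorem prod_pow_single_add_single {M : Type*} [CommMonoid M] (x : ι → M) (i j : ι) :
    ∏ k, x k ^ (Pi.single i 1 + Pi.single j 1 : ι → ℕ) k = x i * x j := by
  simp only [Pi.add_apply, pow_add, prod_mul_distrib, prod_pow_single, pow_one]

theorem prod_factorial_single_add_single (i j : ι) :
    ∏ k, ((Pi.single i 1 + Pi.single j 1 : ι → ℕ) k)! = if i = j then 2 else 1 := by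
  by_cases hij : i = j
  · subst hij
    rw [if_pos rfl, prod_eq_single i (fun k _ hk => by simp [hk]) (by simp)]
    simp
  · rw [if_neg hij]
    refine prod_eq_one fun k _ => ?_
    by_cases hki : k = i <;> by_cases hkj : k = j <;> simp_all

theorem integrableOn_posOrthant_mul_mul_exp_neg_dotProduct (hΔ : ∀ k, 0 < Δ k) (i j : ι) :
    IntegrableOn (fun y => y i * y j * exp (-(Δ ⬝ᵥ y))) (posOrthant ι) := by
  have h := integrableOn_posOrthant_monomial_mul_exp hΔ (Pi.single i 1 + Pi.single j 1 : ι → ℕ)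
  simpa only [prod_mul_distrib, prod_pow_single_add_single, prod_exp_neg_mul] using h

theorem integral_posOrthant_mul_mul_exp_neg_dotProduct (hΔ : ∀ k, 0 < Δ k) (i j : ι) :
    ∫ y in posOrthant ι, y i * y j * exp (-(Δ ⬝ᵥ y)) =
      (1 + if i = j then 1 else 0) / (Δ i * Δ j) * (∏ k, Δ k)⁻¹ := by
  have h := integral_posOrthant_monomial_mul_exp hΔ (Pi.single i 1 + Pi.single j 1 : ι → ℕ)
  simp only [prod_mul_distrib, prod_pow_single_add_single, prod_exp_neg_mul] at h
  rw [h, prod_div_distrib, ← Nat.cast_prod, prod_factorial_single_add_single]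
  simp only [pow_succ, prod_mul_distrib, prod_pow_single_add_single]
  split_ifs <;> push_cast <;> field_simp <;> ring

theorem integrableOn_posOrthant_exp_neg_dotProduct_mul_one_sub (hΔ : ∀ k, 0 < Δ k)
    (M : Matrix ι ι ℝ) :
    IntegrableOn (fun y => exp (-(Δ ⬝ᵥ y)) * (1 - 1 / 2 * (y ⬝ᵥ M *ᵥ y))) (posOrthant ι) := by
  simp only [exp_neg_dotProduct_mul_one_sub_eq]
  exact (integrableOn_posOrthant_exp_neg_dotProduct hΔ).sub <| Integrable.const_mul
    (integrable_finsetSum _ fun i _ => integrable_finsetSum _ fun j _ =>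
      (integrableOn_posOrthant_mul_mul_exp_neg_dotProduct hΔ i j).const_mul (M i j)) _

theorem integral_posOrthant_exp_neg_dotProduct_mul_one_sub (hΔ : ∀ k, 0 < Δ k)
    (M : Matrix ι ι ℝ) :
    ∫ y in posOrthant ι, exp (-(Δ ⬝ᵥ y)) * (1 - 1 / 2 * (y ⬝ᵥ M *ᵥ y)) =
      (∏ k, Δ k)⁻¹ *
        (1 - 1 / 2 * ∑ i, ∑ j, M i j * (1 + if i = j then 1 else 0) / (Δ i * Δ j)) := by
  have hterm (i j : ι) :=
    (integrableOn_posOrthant_mul_mul_exp_neg_dotProduct hΔ i j).const_mul (M i j)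
  have hrow (i : ι) := integrable_finsetSum univ fun j _ => hterm i j
  simp only [exp_neg_dotProduct_mul_one_sub_eq]
  rw [integral_sub (integrableOn_posOrthant_exp_neg_dotProduct hΔ)
      ((integrable_finsetSum _ fun i _ => hrow i).const_mul _),
    integral_const_mul, integral_finsetSum _ fun i _ => hrow i]
  simp only [integral_finsetSum _ fun j _ => hterm _ j, integral_const_mul,
    integral_posOrthant_mul_mul_exp_neg_dotProduct hΔ, integral_posOrthant_exp_neg_dotProduct hΔ]
  rw [mul_sub, mul_one]
  simp only [mul_sum]
  exact congrArg _ (sum_congr rfl fun i _ => sum_congr rfl fun j _ => by ring)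

theorem le_setIntegral_gt_exp_neg_half_dotProduct_mulVec {M : Matrix ι ι ℝ} (hM : M.PosSemidef)
    (a : ι → ℝ) (hΔ : ∀ k, 0 < (a ᵥ* M) k) :
    exp (-(1 / 2) * (a ⬝ᵥ M *ᵥ a)) * (∏ k, (a ᵥ* M) k)⁻¹ *
        (1 - 1 / 2 * ∑ i, ∑ j,
          M i j * (1 + if i = j then 1 else 0) / ((a ᵥ* M) i * (a ᵥ* M) j)) ≤
      ∫ x in {x | ∀ j, a j < x j}, exp (-(1 / 2) * (x ⬝ᵥ M *ᵥ x)) := by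
  have hsymm : M.IsSymm := isHermitian_iff_isSymm.mp hM.isHermitian
  rw [setIntegral_gt_eq_setIntegral_posOrthant_add, mul_assoc,
    ← integral_posOrthant_exp_neg_dotProduct_mul_one_sub hΔ M, ← integral_const_mul]
  refine setIntegral_mono_on
    ((integrableOn_posOrthant_exp_neg_dotProduct_mul_one_sub hΔ M).const_mul _)
    ?_ measurableSet_posOrthant fun y _ => ?_
  · refine ((integrableOn_posOrthant_exp_neg_dotProduct hΔ).const_mul
      (exp (-(1 / 2) * (a ⬝ᵥ M *ᵥ a)))).mono'
      (by fun_prop : Continuous _).aestronglyMeasurable (ae_of_all _ fun y => ?_)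
    rw [norm_of_nonneg (exp_pos _).le, exp_neg_half_dotProduct_mulVec_add hsymm]
    have hq : 0 ≤ y ⬝ᵥ M *ᵥ y := by simpa using hM.dotProduct_mulVec_nonneg y
    gcongr
    exact mul_le_of_le_one_right (exp_pos _).le (exp_le_one_iff.2 (by linarith))
  · rw [exp_neg_half_dotProduct_mulVec_add hsymm]
    gcongr
    linarith [add_one_le_exp (-(1 / 2) * (y ⬝ᵥ M *ᵥ y))]

end

theorem mills_ratio_lower (m : ℕ) (V : Matrix (Fin m) (Fin m) ℝ) (hV : V.PosDef)
    (a : Fin m → ℝ)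
    (Δ : Fin m → ℝ) (hΔdef : ∀ i, Δ i = ∑ j, a j * V⁻¹ j i)
    (hΔ : ∀ i, 0 < Δ i)
    (f : (Fin m → ℝ) → ℝ)
    (hf : ∀ x, f x = Real.sqrt (V⁻¹.det) * (2 * Real.pi) ^ (-(m : ℝ) / 2) *
        Real.exp (-(1 / 2) * (x ⬝ᵥ V⁻¹.mulVec x))) :
    f a * (∏ i, Δ i)⁻¹ *
        (1 - (1 / 2) * ∑ i, ∑ j, V⁻¹ i j * (1 + if i = j then 1 else 0) / (Δ i * Δ j)) ≤
      ∫ x in {x : Fin m → ℝ | ∀ j, a j < x j}, f x := by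
  obtain rfl : Δ = a ᵥ* V⁻¹ := funext hΔdef
  simp only [hf, integral_const_mul, mul_assoc]
  gcongr
  simpa only [mul_assoc] using
    le_setIntegral_gt_exp_neg_half_dotProduct_mulVec hV.inv.posSemidef a hΔ
end

section
/- Let (c_n) be a sequence of positive reals and α > 0 with n·Φ(-c_n) → α as n → ∞. Then c_n → ∞ and c_n² / (2 log n) → 1 as n → ∞. -/
open Filter MeasureTheory

noncomputable def stdNormalPdf (t : ℝ) : ℝ := (2 * Real.pi) ^ (-(1 : ℝ) / 2) * Real.exp (-t ^ 2 / 2)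

/-! Write `Q x = ∫_x^∞ φ` for the Gaussian tail. The bounds `φ (x + 1) ≤ Q x ≤ φ x / x` give
`-log Q x = x² / 2 + O(x)`, so `-log Q x ~ x² / 2`. As `Q` is positive and antitone, `n Q(cₙ) → α`
forces `Q(cₙ) → 0`, hence `cₙ → ∞`; taking logarithms, `-log Q(cₙ) = log n - log α + o(1) ~ log n`,
and therefore `cₙ² / 2 ~ log n`. -/

open Real Set Asymptotics Topology

theorem Filter.Tendsto.atTop_of_antitone_comp {ι α : Type*} [LinearOrder α] {l : Filter ι}
    {f : α → ℝ} (hf : Antitone f) (hpos : ∀ x, 0 < f x) {c : ι → α}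
    (h : Tendsto (f ∘ c) l (𝓝 0)) : Tendsto c l atTop := by
  rw [tendsto_atTop]
  intro M
  filter_upwards [h.eventually (gt_mem_nhds (hpos M))] with n hn
  exact le_of_not_gt fun hlt => (hf hlt.le).not_gt hn

theorem Asymptotics.isEquivalent_of_tendsto_sub {ι : Type*} {l : Filter ι} {u v : ι → ℝ} {a : ℝ}
    (h : Tendsto (fun n => u n - v n) l (𝓝 a)) (hv : Tendsto v l atTop) : u ~[l] v :=
  (h.isBigO_one ℝ).trans_isLittleO ((isLittleO_one_left_iff ℝ).2 (tendsto_abs_atTop_atTop.comp hv))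

lemma stdNormalPdf_pos (t : ℝ) : 0 < stdNormalPdf t := by
  unfold stdNormalPdf; positivity

lemma stdNormalPdf_neg (t : ℝ) : stdNormalPdf (-t) = stdNormalPdf t := by
  simp [stdNormalPdf]

lemma log_stdNormalPdf (t : ℝ) : log (stdNormalPdf t) = -log (2 * π) / 2 - t ^ 2 / 2 := by
  rw [stdNormalPdf, log_mul (by positivity) (exp_pos _).ne', log_rpow (by positivity), log_exp]
  ring

lemma antitoneOn_stdNormalPdf : AntitoneOn stdNormalPdf (Ici 0) := by
  intro s hs t _ hst
  unfold stdNormalPdf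
  gcongr

lemma hasDerivAt_stdNormalPdf (t : ℝ) : HasDerivAt stdNormalPdf (-t * stdNormalPdf t) t := by
  have h : HasDerivAt (fun t : ℝ => -t ^ 2 / 2) (-t) t :=
    ((hasDerivAt_pow 2 t).fun_neg.div_const 2).congr_deriv (by ring)
  refine (h.exp.const_mul ((2 * π) ^ (-(1 : ℝ) / 2))).congr_deriv ?_
  rw [stdNormalPdf]; ring

lemma stdNormalPdf_eq_mul_exp_neg_mul_sq :
    stdNormalPdf = fun t => (2 * π) ^ (-(1 : ℝ) / 2) * exp (-(1 / 2) * t ^ 2) := by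
  ext t; rw [stdNormalPdf, show -t ^ 2 / 2 = -(1 / 2) * t ^ 2 by ring]

lemma integrable_stdNormalPdf : Integrable stdNormalPdf := by
  rw [stdNormalPdf_eq_mul_exp_neg_mul_sq]
  exact (integrable_exp_neg_mul_sq (by norm_num)).const_mul _

lemma integrable_mul_stdNormalPdf : Integrable fun t => t * stdNormalPdf t := by
  simp_rw [stdNormalPdf_eq_mul_exp_neg_mul_sq, mul_left_comm _ ((2 * π) ^ (-(1 : ℝ) / 2))]
  exact (integrable_mul_exp_neg_mul_sq (by norm_num)).const_mul _

lemma tendsto_stdNormalPdf_atTop : Tendsto stdNormalPdf atTop (𝓝 0) := by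
  have h : Tendsto (fun t : ℝ => -t ^ 2 / 2) atTop atBot := by
    simp_rw [neg_div]
    exact tendsto_neg_atTop_atBot.comp ((tendsto_pow_atTop two_ne_zero).atTop_div_const two_pos)
  have := (tendsto_exp_atBot.comp h).const_mul ((2 * π) ^ (-(1 : ℝ) / 2))
  rwa [mul_zero] at this

lemma integral_Ioi_mul_stdNormalPdf (x : ℝ) : ∫ t in Ioi x, t * stdNormalPdf t = stdNormalPdf x := by
  have := integral_Ioi_of_hasDerivAt_of_tendsto' (f := fun t => -stdNormalPdf t) (a := x)
    (fun t _ => (hasDerivAt_stdNormalPdf t).neg.congr_deriv (by ring))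
    integrable_mul_stdNormalPdf.integrableOn (by simpa using tendsto_stdNormalPdf_atTop.neg)
  simpa using this

noncomputable def normalTail (x : ℝ) : ℝ := ∫ t in Ioi x, stdNormalPdf t

lemma setIntegral_Iic_neg_stdNormalPdf (x : ℝ) :
    ∫ t in Iic (-x), stdNormalPdf t = normalTail x := by
  rw [← integral_comp_neg_Ioi, normalTail]
  simp_rw [stdNormalPdf_neg]

lemma normalTail_antitone : Antitone normalTail := fun _ _ hxy =>
  setIntegral_mono_set integrable_stdNormalPdf.integrableOn
    (Eventually.of_forall fun t => (stdNormalPdf_pos t).le)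
    (Ioi_subset_Ioi hxy).eventuallyLE

lemma normalTail_le {x : ℝ} (hx : 0 < x) : normalTail x ≤ stdNormalPdf x / x := by
  rw [le_div_iff₀ hx, normalTail, ← integral_mul_const, ← integral_Ioi_mul_stdNormalPdf]
  refine setIntegral_mono_on (integrable_stdNormalPdf.integrableOn.mul_const x)
    integrable_mul_stdNormalPdf.integrableOn measurableSet_Ioi fun t ht => ?_
  rw [mul_comm]
  exact mul_le_mul_of_nonneg_right (le_of_lt ht) (stdNormalPdf_pos t).le

lemma stdNormalPdf_add_one_le_normalTail {x : ℝ} (hx : 0 ≤ x) :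
    stdNormalPdf (x + 1) ≤ normalTail x := calc
  stdNormalPdf (x + 1) = ∫ _ in Ioc x (x + 1), stdNormalPdf (x + 1) := by simp
  _ ≤ ∫ t in Ioc x (x + 1), stdNormalPdf t :=
    setIntegral_mono_on (integrableOn_const (by simp)) integrable_stdNormalPdf.integrableOn
      measurableSet_Ioc fun t ht =>
        antitoneOn_stdNormalPdf (mem_Ici.2 (hx.trans ht.1.le))
          (mem_Ici.2 (by linarith)) ht.2
  _ ≤ normalTail x :=
    setIntegral_mono_set integrable_stdNormalPdf.integrableOn
      (Eventually.of_forall fun t => (stdNormalPdf_pos t).le) Ioc_subset_Ioi_self.eventuallyLE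

lemma normalTail_pos (x : ℝ) : 0 < normalTail x :=
  (stdNormalPdf_pos _).trans_le <| (stdNormalPdf_add_one_le_normalTail (le_max_right x 0)).trans
    (normalTail_antitone (le_max_left x 0))

lemma add_log_le_neg_log_normalTail {x : ℝ} (hx : 0 < x) :
    x ^ 2 / 2 + log (2 * π) / 2 + log x ≤ -log (normalTail x) := by
  have h := log_le_log (normalTail_pos x) (normalTail_le hx)
  rw [log_div (stdNormalPdf_pos x).ne' hx.ne', log_stdNormalPdf] at h
  linarith

lemma neg_log_normalTail_le {x : ℝ} (hx : 0 ≤ x) :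
    -log (normalTail x) ≤ (x + 1) ^ 2 / 2 + log (2 * π) / 2 := by
  have h := log_le_log (stdNormalPdf_pos _) (stdNormalPdf_add_one_le_normalTail hx)
  rw [log_stdNormalPdf] at h
  linarith

lemma isEquivalent_neg_log_normalTail :
    (fun x => -log (normalTail x)) ~[atTop] fun x => x ^ 2 / 2 := by
  have hC : 0 < log (2 * π) / 2 := div_pos (log_pos (by linarith [pi_gt_three])) two_pos
  have hO : (fun x => -log (normalTail x) - x ^ 2 / 2) =O[atTop] fun x => x := by
    refine IsBigO.of_bound (log (2 * π) / 2 + 2) ?_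
    filter_upwards [eventually_ge_atTop 1] with x hx
    have h₁ := add_log_le_neg_log_normalTail (x := x) (by linarith)
    have h₂ := neg_log_normalTail_le (x := x) (by linarith)
    have := log_nonneg hx
    rw [norm_eq_abs, norm_eq_abs, abs_of_nonneg (by linarith), abs_of_nonneg (by linarith)]
    nlinarith
  have ho : (fun x : ℝ => x) =o[atTop] fun x => x ^ 2 / 2 := by
    simp_rw [div_eq_inv_mul]
    rw [isLittleO_const_mul_right_iff (by norm_num)]
    simpa using isLittleO_pow_pow_atTop_of_lt (𝕜 := ℝ) one_lt_two
  exact hO.trans_isLittleO ho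

theorem bonferroni_critical_value_general (c : ℕ → ℝ) (α : ℝ) (hα : 0 < α)
    (hlim : Tendsto (fun n : ℕ => (n : ℝ) * ∫ t in Set.Iic (-(c n)), stdNormalPdf t)
      atTop (nhds α)) :
    Tendsto c atTop atTop ∧
      Tendsto (fun n : ℕ => (c n) ^ 2 / (2 * Real.log n)) atTop (nhds 1) := by
  simp_rw [setIntegral_Iic_neg_stdNormalPdf] at hlim
  have hn : Tendsto (fun n : ℕ => (n : ℝ)) atTop atTop := tendsto_natCast_atTop_atTop
  have htail : Tendsto (fun n => normalTail (c n)) atTop (𝓝 0) := by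
    refine (hlim.div_atTop hn).congr' ?_
    filter_upwards [eventually_gt_atTop 0] with n hn
    field_simp
  have hc : Tendsto c atTop atTop := htail.atTop_of_antitone_comp normalTail_antitone normalTail_pos
  refine ⟨hc, ?_⟩
  have hlog : Tendsto (fun n => -log (normalTail (c n)) - log n) atTop (𝓝 (-log α)) := by
    refine ((continuousAt_log hα.ne').tendsto.comp hlim).neg.congr' ?_
    filter_upwards [eventually_gt_atTop 0] with n hn
    rw [Function.comp_apply, log_mul (by positivity) (normalTail_pos _).ne']
    ring
  have hequiv : (fun n => c n ^ 2 / 2) ~[atTop] fun n => log n :=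
    (isEquivalent_neg_log_normalTail.comp_tendsto hc).symm.trans
      (isEquivalent_of_tendsto_sub hlog (tendsto_log_atTop.comp hn))
  have hlog_ne : ∀ᶠ n : ℕ in atTop, log (n : ℝ) ≠ 0 := by
    filter_upwards [eventually_gt_atTop 1] with n hn
    exact (log_pos (by exact_mod_cast hn)).ne'
  exact ((isEquivalent_iff_tendsto_one hlog_ne).1 hequiv).congr fun n => div_div _ _ _

theorem bonferroni_critical_value (c : ℕ → ℝ) (hc : ∀ n, 0 < c n) (α : ℝ) (hα : 0 < α)
    (hlim : Tendsto (fun n : ℕ => (n : ℝ) * ∫ t in Set.Iic (-(c n)), stdNormalPdf t)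
      atTop (nhds α)) :
    Tendsto c atTop atTop ∧
      Tendsto (fun n : ℕ => (c n) ^ 2 / (2 * Real.log n)) atTop (nhds 1) :=
  bonferroni_critical_value_general c α hα hlim
end
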